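/- arXiv:2301.06102 — 2 statements merged into one kernel-verified Lean document; each statement's English description precedes it below -/
import Mathlib

section
/- The constant (n + t̃ n^{1/k̃})/(1+t̃) is optimal in the Schwarz inequality φ̃_{t̃,k̃}^2(f(z)) ≤ C·φ_{t,k}^2(z): for the holomorphic map f_0(z) = (z^1, z^1, ..., z^1) from P_m to P_n and any point z_0 = (z_0^1, 0, ..., 0) ∈ P_m, equality φ̃_{t̃,k̃}^2(f_0(z_0)) = ((n + t̃ n^{1/k̃})/(1+t̃)) · φ_{t,k}^2(z_0) holds. -/
/-! Both `phiSq`s reduce to multiples of `‖c‖ ^ 2`: at `Pi.single i c` the `ℓ²` and `ℓ^{2k}`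
terms both equal `‖c‖ ^ 2`, while at the constant vector `(c, …, c) ∈ ℂⁿ` they equal
`n ‖c‖ ^ 2` and `n ^ (1/k) ‖c‖ ^ 2`. -/

noncomputable def phiSq (m : ℕ) (t : ℝ) (k : ℕ) (v : Fin m → ℂ) : ℝ :=
  (1/(1+t)) * (∑ l, ‖v l‖^2 + t * (∑ l, ‖v l‖^(2*k)) ^ ((1:ℝ)/k))

theorem sum_norm_pow_single {ι : Type*} [Fintype ι] [DecidableEq ι] (i : ι) (c : ℂ) {p : ℕ}
    (hp : p ≠ 0) : ∑ l, ‖(Pi.single i c : ι → ℂ) l‖ ^ p = ‖c‖ ^ p := by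
  rw [← Fintype.sum_pi_single' i (‖c‖ ^ p)]
  exact Fintype.sum_congr _ _
    (Pi.apply_single (fun (_ : ι) (z : ℂ) => ‖z‖ ^ p) (fun _ => by simp [hp]) i c)

theorem pow_two_mul_rpow_one_div (a : ℝ) {k : ℕ} (hk : k ≠ 0) :
    (a ^ (2 * k)) ^ ((1 : ℝ) / k) = a ^ 2 := by
  rw [pow_mul, one_div, Real.pow_rpow_inv_natCast (by positivity) hk]

theorem phiSq_single {m : ℕ} {t : ℝ} (ht : 1 + t ≠ 0) {k : ℕ} (hk : k ≠ 0) (i : Fin m) (c : ℂ) :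
    phiSq m t k (Pi.single i c) = ‖c‖ ^ 2 := by
  rw [phiSq, sum_norm_pow_single i c two_ne_zero, sum_norm_pow_single i c (by positivity),
    pow_two_mul_rpow_one_div ‖c‖ hk]
  field_simp

theorem phiSq_const (n : ℕ) (t : ℝ) {k : ℕ} (hk : k ≠ 0) (c : ℂ) :
    phiSq n t k (fun _ => c) = ((n + t * (n : ℝ) ^ ((1 : ℝ) / k)) / (1 + t)) * ‖c‖ ^ 2 := by
  simp only [phiSq, Finset.sum_const, Finset.card_univ, Fintype.card_fin, nsmul_eq_mul]
  rw [Real.mul_rpow (by positivity) (by positivity), pow_two_mul_rpow_one_div ‖c‖ hk]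
  ring

theorem schwarz_phi_optimal_general (m n : ℕ) [NeZero m] (t tt : ℝ)
    (ht : 0 ≤ t) (k kt : ℕ) (hk : 2 ≤ k) (hkt : 2 ≤ kt)
    (c : ℂ) :
    phiSq n tt kt ((fun z : Fin m → ℂ => fun _ : Fin n => z 0) (Pi.single 0 c))
      = ((n + tt * (n:ℝ) ^ ((1:ℝ)/kt))/(1+tt)) * phiSq m t k (Pi.single 0 c) := by
  simp only [Pi.single_eq_same]
  rw [phiSq_const n tt (by omega) c, phiSq_single (by positivity) (by omega) 0 c]

/-- The constant is optimal: for `f₀(z) = (z¹,...,z¹)` and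
`z₀ = (z₀¹,0,...,0)` one has equality in the Schwarz inequality. -/
theorem schwarz_phi_optimal (m n : ℕ) [NeZero m] [NeZero n] (t tt : ℝ)
    (ht : 0 ≤ t) (htt : 0 ≤ tt) (k kt : ℕ) (hk : 2 ≤ k) (hkt : 2 ≤ kt)
    (c : ℂ) (hc : ‖c‖ < 1) :
    phiSq n tt kt ((fun z : Fin m → ℂ => fun _ : Fin n => z 0) (Pi.single 0 c))
      = ((n + tt * (n:ℝ) ^ ((1:ℝ)/kt))/(1+tt)) * phiSq m t k (Pi.single 0 c) :=
  schwarz_phi_optimal_general m n t tt ht k kt hk hkt c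
end

section
/- Let f : P_m → P_n be holomorphic with f(λz) = λ^N f(z) for all λ in the unit disc and all z ∈ P_m, where N ≥ 1 is an integer. Then φ̃_{t̃,k̃}^2(f(z)) ≤ ((n + t̃ n^{1/k̃})/(1+t̃)) · φ_{t,k}^{2N}(z) for all z ∈ P_m. -/
def polydisc (m : ℕ) : Set (Fin m → ℂ) := {z | ∀ l, ‖z l‖ < 1}

/-!
Homogeneity alone gives a Schwarz-type bound: if every coordinate of `z` has modulus `< s < 1`,
write `z = s • (s⁻¹ • z)` with `s⁻¹ • z` still in the polydisc, so each coordinate of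
`f z = s ^ N • f (s⁻¹ • z)` has modulus `≤ s ^ N`; letting `s` decrease to `max_l |z_l|`
gives `|f(z)_j| ≤ (max_l |z_l|) ^ N`. Since `|z_l|² ≤ φ²(z)` for every `l`, each
`|f(z)_j|²` is at most `φ²(z) ^ N`, and `φ̃²` of a vector whose squared coordinates are bounded
by `c` is at most `(n + t̃ n^{1/k̃})/(1+t̃) · c`.
-/

open Finset

section PowerMean

variable {ι : Type*} [Fintype ι] {a : ι → ℝ} {k : ℕ}

lemma le_sum_pow_rpow_one_div (ha : ∀ i, 0 ≤ a i) (hk : k ≠ 0) (i : ι) :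
    a i ≤ (∑ j, a j ^ k) ^ ((1 : ℝ) / k) := by
  calc a i = (a i ^ k) ^ ((1 : ℝ) / k) := by rw [one_div, Real.pow_rpow_inv_natCast (ha i) hk]
    _ ≤ (∑ j, a j ^ k) ^ ((1 : ℝ) / k) :=
      Real.rpow_le_rpow (pow_nonneg (ha i) k)
        (single_le_sum (f := fun j => a j ^ k) (fun j _ => pow_nonneg (ha j) k) (mem_univ i))
        (by positivity)

lemma sum_pow_rpow_one_div_le (ha : ∀ i, 0 ≤ a i) (hk : k ≠ 0) {c : ℝ} (hc : 0 ≤ c)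
    (h : ∀ i, a i ≤ c) :
    (∑ j, a j ^ k) ^ ((1 : ℝ) / k) ≤ (Fintype.card ι : ℝ) ^ ((1 : ℝ) / k) * c := by
  have hsum : ∑ j, a j ^ k ≤ Fintype.card ι * c ^ k := by
    simpa using sum_le_sum fun j (_ : j ∈ univ) => pow_le_pow_left₀ (ha j) (h j) k
  calc (∑ j, a j ^ k) ^ ((1 : ℝ) / k)
      ≤ (Fintype.card ι * c ^ k) ^ ((1 : ℝ) / k) := by
        gcongr
        exact sum_nonneg fun j _ => pow_nonneg (ha j) k
    _ = (Fintype.card ι : ℝ) ^ ((1 : ℝ) / k) * c := by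
        rw [Real.mul_rpow (by positivity) (by positivity), one_div,
          Real.pow_rpow_inv_natCast hc hk]

end PowerMean

section PhiSq

variable {m : ℕ} {t : ℝ} {k : ℕ}

lemma phiSq_nonneg (ht : 0 ≤ t) (v : Fin m → ℂ) : 0 ≤ phiSq m t k v := by
  unfold phiSq
  positivity

lemma sq_norm_le_phiSq (ht : 0 ≤ t) (hk : k ≠ 0) (v : Fin m → ℂ) (l : Fin m) :
    ‖v l‖ ^ 2 ≤ phiSq m t k v := by
  have hA : ‖v l‖ ^ 2 ≤ ∑ i, ‖v i‖ ^ 2 :=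
    single_le_sum (f := fun i => ‖v i‖ ^ 2) (fun i _ => by positivity) (mem_univ l)
  have hB : ‖v l‖ ^ 2 ≤ (∑ i, ‖v i‖ ^ (2 * k)) ^ ((1 : ℝ) / k) := by
    simpa only [pow_mul] using
      le_sum_pow_rpow_one_div (a := fun i => ‖v i‖ ^ 2) (fun i => by positivity) hk l
  rw [phiSq, one_div, le_inv_mul_iff₀ (by linarith)]
  nlinarith [mul_le_mul_of_nonneg_left hB ht]

lemma phiSq_le_of_sq_norm_le (ht : 0 ≤ t) (hk : k ≠ 0) {v : Fin m → ℂ} {c : ℝ} (hc : 0 ≤ c)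
    (h : ∀ l, ‖v l‖ ^ 2 ≤ c) :
    phiSq m t k v ≤ ((m + t * (m : ℝ) ^ ((1 : ℝ) / k)) / (1 + t)) * c := by
  have hA : ∑ l, ‖v l‖ ^ 2 ≤ m * c := by
    simpa using sum_le_sum fun l (_ : l ∈ univ) => h l
  have hB : (∑ l, ‖v l‖ ^ (2 * k)) ^ ((1 : ℝ) / k) ≤ (m : ℝ) ^ ((1 : ℝ) / k) * c := by
    simpa only [pow_mul, Fintype.card_fin] using
      sum_pow_rpow_one_div_le (a := fun l => ‖v l‖ ^ 2) (fun l => by positivity) hk hc h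
  calc phiSq m t k v ≤ (1 / (1 + t)) * (m * c + t * ((m : ℝ) ^ ((1 : ℝ) / k) * c)) := by
        unfold phiSq
        gcongr
    _ = ((m + t * (m : ℝ) ^ ((1 : ℝ) / k)) / (1 + t)) * c := by ring

end PhiSq

section Homogeneous

variable {m n N : ℕ} {f : (Fin m → ℂ) → (Fin n → ℂ)}

lemma norm_apply_le_pow_of_homogeneous_of_lt
    (hmaps : ∀ z ∈ polydisc m, f z ∈ polydisc n)
    (hhom : ∀ lam : ℂ, ‖lam‖ < 1 → ∀ z ∈ polydisc m, f (lam • z) = lam ^ N • f z)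
    {z : Fin m → ℂ} {s : ℝ} (hs0 : 0 < s) (hs1 : s < 1) (hz : ∀ l, ‖z l‖ < s) (j : Fin n) :
    ‖f z j‖ ≤ s ^ N := by
  have hsC : (s : ℂ) ≠ 0 := by exact_mod_cast hs0.ne'
  have hnorm : ‖(s : ℂ)‖ = s := Complex.norm_of_nonneg hs0.le
  have hw : (s : ℂ)⁻¹ • z ∈ polydisc m := fun l => by
    rw [Pi.smul_apply, norm_smul, norm_inv, hnorm, inv_mul_lt_iff₀ hs0, mul_one]
    exact hz l
  have hfz : f z = (s : ℂ) ^ N • f ((s : ℂ)⁻¹ • z) := by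
    rw [← hhom _ (hnorm.trans_lt hs1) _ hw, smul_inv_smul₀ hsC]
  calc ‖f z j‖ = s ^ N * ‖f ((s : ℂ)⁻¹ • z) j‖ := by
        rw [hfz, Pi.smul_apply, norm_smul, norm_pow, hnorm]
    _ ≤ s ^ N * 1 := by gcongr; exact (hmaps _ hw j).le
    _ = s ^ N := mul_one _

lemma norm_apply_le_pow_of_homogeneous
    (hmaps : ∀ z ∈ polydisc m, f z ∈ polydisc n)
    (hhom : ∀ lam : ℂ, ‖lam‖ < 1 → ∀ z ∈ polydisc m, f (lam • z) = lam ^ N • f z)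
    {z : Fin m → ℂ} (hz : z ∈ polydisc m) {r : ℝ} (hr : 0 ≤ r) (hzr : ∀ l, ‖z l‖ ≤ r)
    (j : Fin n) : ‖f z j‖ ≤ r ^ N := by
  rcases lt_or_ge r 1 with hr1 | hr1
  · refine ge_of_tendsto ((continuous_pow N).continuousWithinAt (s := Set.Ioi r) (x := r)) ?_
    filter_upwards [Ioo_mem_nhdsGT hr1] with s hs
    exact norm_apply_le_pow_of_homogeneous_of_lt hmaps hhom (hr.trans_lt hs.1) hs.2
      (fun l => (hzr l).trans_lt hs.1) j
  · exact (hmaps z hz j).le.trans (one_le_pow₀ hr1)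

end Homogeneous

theorem schwarz_phi_homogeneous_general (m n : ℕ) (t tt : ℝ) (ht : 0 ≤ t) (htt : 0 ≤ tt)
    (k kt N : ℕ) (hk : 2 ≤ k) (hkt : 2 ≤ kt)
    (f : (Fin m → ℂ) → (Fin n → ℂ))
    (hmaps : ∀ z ∈ polydisc m, f z ∈ polydisc n)
    (hhom : ∀ lam : ℂ, ‖lam‖ < 1 → ∀ z ∈ polydisc m,
      f (lam • z) = lam ^ N • f z) :
    ∀ z ∈ polydisc m,
      phiSq n tt kt (f z)
        ≤ ((n + tt * (n:ℝ) ^ ((1:ℝ)/kt))/(1+tt)) * (phiSq m t k z) ^ N := by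
  intro z hz
  set P := phiSq m t k z
  have hP : 0 ≤ P := phiSq_nonneg ht z
  have hzP : ∀ l, ‖z l‖ ≤ √P := fun l =>
    (Real.le_sqrt (norm_nonneg _) hP).mpr (sq_norm_le_phiSq ht (by omega) z l)
  have hfP : ∀ j, ‖f z j‖ ^ 2 ≤ P ^ N := fun j => by
    calc ‖f z j‖ ^ 2 ≤ (√P ^ N) ^ 2 := by
          gcongr
          exact norm_apply_le_pow_of_homogeneous hmaps hhom hz (Real.sqrt_nonneg P) hzP j
      _ = P ^ N := by rw [← pow_mul, mul_comm, pow_mul, Real.sq_sqrt hP]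
  exact phiSq_le_of_sq_norm_le htt (by omega) (pow_nonneg hP N) hfP

/-- If `f : P_m → P_n` is holomorphic and homogeneous of degree `N`
(`f(λz) = λ^N f(z)` for `λ` in the unit disc), then
`φ̃²_{t̃,k̃}(f(z)) ≤ ((n + t̃ n^{1/k̃})/(1+t̃)) · (φ²_{t,k}(z))^N`. -/
theorem schwarz_phi_homogeneous (m n : ℕ) (t tt : ℝ) (ht : 0 ≤ t) (htt : 0 ≤ tt)
    (k kt N : ℕ) (hk : 2 ≤ k) (hkt : 2 ≤ kt) (hN : 1 ≤ N)
    (f : (Fin m → ℂ) → (Fin n → ℂ))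
    (hf : DifferentiableOn ℂ f (polydisc m))
    (hmaps : ∀ z ∈ polydisc m, f z ∈ polydisc n)
    (hhom : ∀ lam : ℂ, ‖lam‖ < 1 → ∀ z ∈ polydisc m,
      f (lam • z) = lam ^ N • f z) :
    ∀ z ∈ polydisc m,
      phiSq n tt kt (f z)
        ≤ ((n + tt * (n:ℝ) ^ ((1:ℝ)/kt))/(1+tt)) * (phiSq m t k z) ^ N :=
  schwarz_phi_homogeneous_general m n t tt ht htt k kt N hk hkt f hmaps hhom
end
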